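/- arXiv:2107.11917 — 4 statements merged into one kernel-verified Lean document; each statement's English description precedes it below -/
import Mathlib

section
/- Let T ∈ (0,∞], let m ≠ 0 be a real number, let F : [0,T) → ℝ be continuous with F(t) > 0 for all t, and let ρ : [0,T) → ℝ be C² with ρ(t) > 0 for all t, ρ(0) = 1, and ρ''(t) = m²/(4ρ(t)³) + (1/2) F(t) ρ(t). Then for every t ∈ [0,T): ρ(t)² ≥ m²/(4ρ'(0)² + m²); equivalently, 1/ρ(t)² ≤ 1 + 4ρ'(0)²/m². -/
/-!
Since `ρ'' = m²/(4ρ³) + Fρ/2 ≥ 0`, `ρ` is convex, so on `[0, t]` the derivative `ρ'` is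
nonpositive up to some point `s` and nonnegative after it. On `[0, s]` the energy
`E = ρ'² + m²/(4ρ²)` satisfies `E' = Fρρ' ≤ 0`, so `m² ≤ 4ρ(s)²E(s) ≤ 4ρ(s)²E(0)`; on `[s, t]`
the function `ρ` increases, so `ρ(t) ≥ ρ(s)`. With `ρ(0) = 1` this is `ρ(t)² ≥ m²/(4ρ'(0)² + m²)`.
-/

open Set

theorem monotoneOn_of_hasDerivWithinAt_of_nonneg {D : Set ℝ} (hD : Convex ℝ D) {f f' : ℝ → ℝ}
    (hf : ∀ x ∈ D, HasDerivWithinAt f (f' x) D x) (hf' : ∀ x ∈ interior D, 0 ≤ f' x) :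
    MonotoneOn f D :=
  monotoneOn_of_hasDerivWithinAt_nonneg hD (fun x hx ↦ (hf x hx).continuousWithinAt)
    (fun x hx ↦ (hf x (interior_subset hx)).mono interior_subset) hf'

theorem antitoneOn_of_hasDerivWithinAt_of_nonpos {D : Set ℝ} (hD : Convex ℝ D) {f f' : ℝ → ℝ}
    (hf : ∀ x ∈ D, HasDerivWithinAt f (f' x) D x) (hf' : ∀ x ∈ interior D, f' x ≤ 0) :
    AntitoneOn f D :=
  antitoneOn_of_hasDerivWithinAt_nonpos hD (fun x hx ↦ (hf x hx).continuousWithinAt)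
    (fun x hx ↦ (hf x (interior_subset hx)).mono interior_subset) hf'

theorem MonotoneOn.exists_nonpos_Ioo_nonneg_Ioo {g : ℝ → ℝ} {a b : ℝ} (hab : a ≤ b)
    (hg : MonotoneOn g (Icc a b)) :
    ∃ s ∈ Icc a b, (∀ x ∈ Ioo a s, g x ≤ 0) ∧ ∀ x ∈ Ioo s b, 0 ≤ g x := by
  set S := insert a {x | x ∈ Icc a b ∧ g x ≤ 0}
  have hSb : b ∈ upperBounds S := by
    rintro x (rfl | hx)
    exacts [hab, hx.1.2]
  refine ⟨sSup S, ⟨le_csSup ⟨b, hSb⟩ (mem_insert a _), csSup_le ⟨a, mem_insert a _⟩ hSb⟩,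
    fun x hx ↦ ?_, fun x hx ↦ ?_⟩
  · obtain ⟨y, hyS, hxy⟩ := exists_lt_of_lt_csSup ⟨a, mem_insert a _⟩ hx.2
    rcases hyS with rfl | ⟨hy, hgy⟩
    · exact absurd hx.1 hxy.not_gt
    · exact (hg ⟨hx.1.le, hxy.le.trans hy.2⟩ hy hxy.le).trans hgy
  · by_contra! hgx
    have hxS : x ∈ S :=
      .inr ⟨⟨hx.1.le.trans' (le_csSup ⟨b, hSb⟩ (mem_insert a _)), hx.2.le⟩, hgx.le⟩
    exact (le_csSup ⟨b, hSb⟩ hxS).not_gt hx.1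

/-- The conserved energy of the Ermakov–Pinney equation `ρ'' = m²/(4ρ³)`. -/
noncomputable def ermakovEnergy (m : ℝ) (ρ ρ' : ℝ → ℝ) (t : ℝ) : ℝ :=
  ρ' t ^ 2 + m ^ 2 / (4 * ρ t ^ 2)

theorem hasDerivWithinAt_ermakovEnergy {m t : ℝ} {s : Set ℝ} {F ρ ρ' : ℝ → ℝ}
    (hρ : HasDerivWithinAt ρ (ρ' t) s t)
    (hρ' : HasDerivWithinAt ρ' (m ^ 2 / (4 * ρ t ^ 3) + 1 / 2 * F t * ρ t) s t)
    (hρt : ρ t ≠ 0) :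
    HasDerivWithinAt (ermakovEnergy m ρ ρ') (ρ' t * F t * ρ t) s t := by
  have h := (hρ'.pow 2).add
    ((hasDerivWithinAt_const t s (m ^ 2)).div ((hρ.pow 2).const_mul 4) (by simp [hρt]))
  refine h.congr_deriv ?_
  simp only [Pi.pow_apply]
  field_simp
  ring

theorem sq_le_four_mul_sq_mul_ermakovEnergy (m : ℝ) (ρ ρ' : ℝ → ℝ) {t : ℝ} (hρt : ρ t ≠ 0) :
    m ^ 2 ≤ 4 * ρ t ^ 2 * ermakovEnergy m ρ ρ' t := by
  have h : 4 * ρ t ^ 2 * ermakovEnergy m ρ ρ' t = 4 * ρ t ^ 2 * ρ' t ^ 2 + m ^ 2 := by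
    unfold ermakovEnergy
    field_simp
  rw [h]
  exact le_add_of_nonneg_left (by positivity)

theorem ermakovEnergy_nonneg (m : ℝ) (ρ ρ' : ℝ → ℝ) (t : ℝ) : 0 ≤ ermakovEnergy m ρ ρ' t := by
  unfold ermakovEnergy
  positivity

theorem div_ermakovEnergy_le_sq {m a b : ℝ} {F ρ ρ' : ℝ → ℝ} (hab : a ≤ b)
    (hF : ∀ t ∈ Ioo a b, 0 ≤ F t) (hρpos : ∀ t ∈ Icc a b, 0 < ρ t)
    (hρ : ∀ t ∈ Icc a b, HasDerivWithinAt ρ (ρ' t) (Icc a b) t)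
    (hρ' : ∀ t ∈ Icc a b,
      HasDerivWithinAt ρ' (m ^ 2 / (4 * ρ t ^ 3) + 1 / 2 * F t * ρ t) (Icc a b) t) :
    m ^ 2 / (4 * ermakovEnergy m ρ ρ' a) ≤ ρ b ^ 2 := by
  have hρ'mono : MonotoneOn ρ' (Icc a b) :=
    monotoneOn_of_hasDerivWithinAt_of_nonneg (convex_Icc a b) hρ' fun t ht ↦ by
      rw [interior_Icc] at ht
      have := hρpos t (Ioo_subset_Icc_self ht)
      have := hF t ht
      positivity
  obtain ⟨s, hs, hneg, hpos⟩ := hρ'mono.exists_nonpos_Ioo_nonneg_Ioo hab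
  have hleft : Icc a s ⊆ Icc a b := Icc_subset_Icc_right hs.2
  have hright : Icc s b ⊆ Icc a b := Icc_subset_Icc_left hs.1
  have henergy : ermakovEnergy m ρ ρ' s ≤ ermakovEnergy m ρ ρ' a := by
    refine antitoneOn_of_hasDerivWithinAt_of_nonpos (convex_Icc a s)
      (fun t ht ↦ (hasDerivWithinAt_ermakovEnergy (hρ t (hleft ht)) (hρ' t (hleft ht))
        (hρpos t (hleft ht)).ne').mono hleft) (fun t ht ↦ ?_)
      (left_mem_Icc.2 hs.1) (right_mem_Icc.2 hs.1) hs.1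
    rw [interior_Icc] at ht
    exact mul_nonpos_of_nonpos_of_nonneg
      (mul_nonpos_of_nonpos_of_nonneg (hneg t ht) (hF t ⟨ht.1, ht.2.trans_le hs.2⟩))
      (hρpos t (hleft (Ioo_subset_Icc_self ht))).le
  have hρs : ρ s ≤ ρ b :=
    monotoneOn_of_hasDerivWithinAt_of_nonneg (convex_Icc s b)
      (fun t ht ↦ (hρ t (hright ht)).mono hright)
      (fun t ht ↦ hpos t (by rwa [interior_Icc] at ht))
      (left_mem_Icc.2 hs.2) (right_mem_Icc.2 hs.2) hs.2
  have hbound : m ^ 2 ≤ ρ s ^ 2 * (4 * ermakovEnergy m ρ ρ' a) :=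
    calc m ^ 2 ≤ 4 * ρ s ^ 2 * ermakovEnergy m ρ ρ' s :=
          sq_le_four_mul_sq_mul_ermakovEnergy m ρ ρ' (hρpos s hs).ne'
      _ ≤ ρ s ^ 2 * (4 * ermakovEnergy m ρ ρ' a) := by nlinarith [sq_nonneg (ρ s)]
  calc m ^ 2 / (4 * ermakovEnergy m ρ ρ' a)
      ≤ ρ s ^ 2 :=
        div_le_of_le_mul₀ (mul_nonneg zero_le_four (ermakovEnergy_nonneg m ρ ρ' a)) (sq_nonneg _)
          hbound
    _ ≤ ρ b ^ 2 := pow_le_pow_left₀ (hρpos s hs).le hρs 2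

theorem stmt_15_general (T : EReal)
    (J : Set ℝ) (hJ : J = {t : ℝ | 0 ≤ t ∧ (t : EReal) < T})
    (m : ℝ) (hm : m ≠ 0)
    (F : ℝ → ℝ) (hFpos : ∀ t ∈ J, 0 < F t)
    (ρ ρ' : ℝ → ℝ)
    (hρpos : ∀ t ∈ J, 0 < ρ t) (hρ0 : ρ 0 = 1)
    (hρ : ∀ t ∈ J, HasDerivWithinAt ρ (ρ' t) J t)
    (hρ' : ∀ t ∈ J,
      HasDerivWithinAt ρ' (m ^ 2 / (4 * ρ t ^ 3) + 1 / 2 * F t * ρ t) J t) :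
    ∀ t ∈ J,
      m ^ 2 / (4 * ρ' 0 ^ 2 + m ^ 2) ≤ ρ t ^ 2 ∧
      1 / ρ t ^ 2 ≤ 1 + 4 * ρ' 0 ^ 2 / m ^ 2 := by
  intro t ht
  rw [hJ] at ht
  have hsub : Icc 0 t ⊆ J := fun x hx ↦ hJ ▸ ⟨hx.1, (EReal.coe_le_coe_iff.2 hx.2).trans_lt ht.2⟩
  have hE0 : 4 * ermakovEnergy m ρ ρ' 0 = 4 * ρ' 0 ^ 2 + m ^ 2 := by
    simp only [ermakovEnergy, hρ0]
    ring
  have key : m ^ 2 / (4 * ρ' 0 ^ 2 + m ^ 2) ≤ ρ t ^ 2 := hE0 ▸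
    div_ermakovEnergy_le_sq ht.1 (fun x hx ↦ (hFpos x (hsub (Ioo_subset_Icc_self hx))).le)
      (fun x hx ↦ hρpos x (hsub hx)) (fun x hx ↦ (hρ x (hsub hx)).mono hsub)
      (fun x hx ↦ (hρ' x (hsub hx)).mono hsub)
  refine ⟨key, ?_⟩
  calc 1 / ρ t ^ 2 ≤ 1 / (m ^ 2 / (4 * ρ' 0 ^ 2 + m ^ 2)) :=
        one_div_le_one_div_of_le (by positivity) key
    _ = 1 + 4 * ρ' 0 ^ 2 / m ^ 2 := by
        field_simp
        ring

/-- lower bound on ρ for the Ermakov–Pinney-type equation with repulsive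
force, underlying the De Gregorio bound η_θ ≤ 1 + u₀'²/m₀². -/
theorem stmt_15 (T : EReal) (hT : 0 < T)
    (J : Set ℝ) (hJ : J = {t : ℝ | 0 ≤ t ∧ (t : EReal) < T})
    (m : ℝ) (hm : m ≠ 0)
    (F : ℝ → ℝ) (hFcont : ContinuousOn F J) (hFpos : ∀ t ∈ J, 0 < F t)
    (ρ ρ' : ℝ → ℝ)
    (hρpos : ∀ t ∈ J, 0 < ρ t) (hρ0 : ρ 0 = 1)
    (hρ : ∀ t ∈ J, HasDerivWithinAt ρ (ρ' t) J t)
    (hρ' : ∀ t ∈ J,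
      HasDerivWithinAt ρ' (m ^ 2 / (4 * ρ t ^ 3) + 1 / 2 * F t * ρ t) J t) :
    ∀ t ∈ J,
      m ^ 2 / (4 * ρ' 0 ^ 2 + m ^ 2) ≤ ρ t ^ 2 ∧
      1 / ρ t ^ 2 ≤ 1 + 4 * ρ' 0 ^ 2 / m ^ 2 :=
  stmt_15_general T J hJ m hm F hFpos ρ ρ' hρpos hρ0 hρ hρ'
end

section
/- Let σ ∈ ℝ and let η, V : ℝ → ℝ be C¹ functions with η(θ+1) = η(θ) + 1, η'(θ) ≥ 0 for all θ, and V(θ+1) = V(θ). Let P : ℝ → ℝ be a C¹ 1-periodic function satisfying P'(θ) = (V(θ) − σ) η'(θ) for all θ and ∫₀¹ P(θ) η'(θ) dθ = 0. Then sup_{θ∈ℝ} |P(θ)| ≤ √( ∫₀¹ (V(θ) − σ)² η'(θ) dθ ). -/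
/-!
Since `∫₀¹ P η' = 0` with weight `η' ≥ 0` of total mass `∫₀¹ η' = η(1) - η(0) = 1`, the periodic
function `P` vanishes somewhere. Integrating `P'` from that zero over at most one period gives
`|P| ≤ ∫₀¹ |P'| = ∫₀¹ |V - σ| η'`, and Cauchy–Schwarz for the probability weight `η'` bounds
this by `√(∫₀¹ (V - σ)² η')`.
-/

open Set

theorem Function.Periodic.deriv {f : ℝ → ℝ} {c : ℝ} (hf : Function.Periodic f c) :
    Function.Periodic (deriv f) c := fun x => by
  simpa [funext hf] using (deriv_comp_add_const f c x).symm

theorem sq_integral_mul_le_integral_sq_mul {f w : ℝ → ℝ} {a b : ℝ} (hab : a ≤ b)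
    (hf : Continuous f) (hw : Continuous w) (hw₀ : ∀ x ∈ Icc a b, 0 ≤ w x)
    (hw₁ : ∫ x in a..b, w x = 1) :
    (∫ x in a..b, f x * w x) ^ 2 ≤ ∫ x in a..b, f x ^ 2 * w x := by
  set c := ∫ x in a..b, f x * w x
  -- the weighted variance of `f` is nonnegative
  have hvar : 0 ≤ ∫ x in a..b, (f x - c) ^ 2 * w x :=
    intervalIntegral.integral_nonneg hab fun x hx => mul_nonneg (sq_nonneg _) (hw₀ x hx)
  have hexpand : ∫ x in a..b, (f x - c) ^ 2 * w x = (∫ x in a..b, f x ^ 2 * w x) - c ^ 2 := by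
    have hfw : IntervalIntegrable (fun x => f x * w x) MeasureTheory.volume a b :=
      (hf.mul hw).intervalIntegrable a b
    have hf2w : IntervalIntegrable (fun x => f x ^ 2 * w x) MeasureTheory.volume a b :=
      ((hf.pow 2).mul hw).intervalIntegrable a b
    have hw' : IntervalIntegrable w MeasureTheory.volume a b := hw.intervalIntegrable a b
    calc ∫ x in a..b, (f x - c) ^ 2 * w x
        = ∫ x in a..b, (f x ^ 2 * w x - 2 * c * (f x * w x)) + c ^ 2 * w x := by
          congr 1; ext x; ring
      _ = (∫ x in a..b, f x ^ 2 * w x) - 2 * c * c + c ^ 2 * 1 := by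
          rw [intervalIntegral.integral_add (hf2w.sub (hfw.const_mul _)) (hw'.const_mul _),
            intervalIntegral.integral_sub hf2w (hfw.const_mul _),
            intervalIntegral.integral_const_mul, intervalIntegral.integral_const_mul, hw₁]
      _ = (∫ x in a..b, f x ^ 2 * w x) - c ^ 2 := by ring
  linarith

theorem exists_zero_of_integral_mul_eq_zero {f w : ℝ → ℝ} {a b : ℝ} (hab : a ≤ b)
    (hf : Continuous f) (hw : Continuous w) (hw₀ : ∀ x ∈ Icc a b, 0 ≤ w x)
    (hw_pos : 0 < ∫ x in a..b, w x) (hfw : ∫ x in a..b, f x * w x = 0) :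
    ∃ x₀ ∈ Icc a b, f x₀ = 0 := by
  have hne : (Icc a b).Nonempty := nonempty_Icc.2 hab
  obtain ⟨m, hm, hmin⟩ := isCompact_Icc.exists_isMinOn hne hf.continuousOn
  obtain ⟨M, hM, hmax⟩ := isCompact_Icc.exists_isMaxOn hne hf.continuousOn
  have hfw_int : IntervalIntegrable (fun x => f x * w x) MeasureTheory.volume a b :=
    (hf.mul hw).intervalIntegrable a b
  have hcw_int (y : ℝ) : IntervalIntegrable (fun x => y * w x) MeasureTheory.volume a b :=
    (continuous_const.mul hw).intervalIntegrable a b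
  have hm_nonpos : f m ≤ 0 := by
    have : ∫ x in a..b, f m * w x ≤ ∫ x in a..b, f x * w x :=
      intervalIntegral.integral_mono_on hab (hcw_int _) hfw_int fun x hx =>
        mul_le_mul_of_nonneg_right (hmin hx) (hw₀ x hx)
    rw [intervalIntegral.integral_const_mul, hfw] at this
    exact nonpos_of_mul_nonpos_left this hw_pos
  have hM_nonneg : 0 ≤ f M := by
    have : ∫ x in a..b, f x * w x ≤ ∫ x in a..b, f M * w x :=
      intervalIntegral.integral_mono_on hab hfw_int (hcw_int _) fun x hx =>
        mul_le_mul_of_nonneg_right (hmax hx) (hw₀ x hx)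
    rw [intervalIntegral.integral_const_mul, hfw] at this
    exact nonneg_of_mul_nonneg_left this hw_pos
  obtain ⟨x₀, hx₀, hfx₀⟩ :=
    intermediate_value_uIcc hf.continuousOn (mem_uIcc.2 (Or.inl ⟨hm_nonpos, hM_nonneg⟩))
  exact ⟨x₀, uIcc_subset_Icc hm hM hx₀, hfx₀⟩

theorem abs_sub_le_integral_abs_deriv {f : ℝ → ℝ} {x y : ℝ} (hxy : x ≤ y)
    (hf : Differentiable ℝ f) (hf' : Continuous (deriv f)) :
    |f y - f x| ≤ ∫ t in x..y, |deriv f t| := by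
  rw [← intervalIntegral.integral_deriv_eq_sub (fun t _ => hf t) (hf'.intervalIntegrable x y)]
  exact intervalIntegral.abs_integral_le_integral_abs hxy

theorem abs_le_integral_abs_deriv_of_periodic {f : ℝ → ℝ} {T x₀ : ℝ}
    (hper : Function.Periodic f T) (hT : 0 < T)
    (hf : Differentiable ℝ f) (hf' : Continuous (deriv f)) (hx₀ : f x₀ = 0) (x : ℝ) :
    |f x| ≤ ∫ t in (0:ℝ)..T, |deriv f t| := by
  obtain ⟨y, ⟨hx₀y, hyT⟩, hfy⟩ := hper.exists_mem_Ico hT x x₀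
  calc |f x| = |f y - f x₀| := by rw [hfy, hx₀, sub_zero]
    _ ≤ ∫ t in x₀..y, |deriv f t| := abs_sub_le_integral_abs_deriv hx₀y hf hf'
    _ ≤ ∫ t in x₀..x₀ + T, |deriv f t| :=
        intervalIntegral.integral_mono_interval le_rfl hx₀y hyT.le
          (Filter.Eventually.of_forall fun _ => abs_nonneg _) (hf'.abs.intervalIntegrable _ _)
    _ = ∫ t in (0:ℝ)..T, |deriv f t| := by
        simpa using (hper.deriv.comp abs).intervalIntegral_add_eq x₀ 0

theorem integral_deriv_eq_one_of_add_one {η : ℝ → ℝ} (hη : ContDiff ℝ 1 η)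
    (hηper : ∀ θ : ℝ, η (θ + 1) = η θ + 1) : ∫ θ in (0:ℝ)..1, deriv η θ = 1 := by
  rw [intervalIntegral.integral_deriv_eq_sub (fun x _ => hη.differentiable one_ne_zero x)
    ((hη.continuous_deriv le_rfl).intervalIntegrable 0 1)]
  linarith [zero_add (1:ℝ) ▸ hηper 0]

theorem stmt_16_general (σ : ℝ) (η V P : ℝ → ℝ)
    (hη : ContDiff ℝ 1 η) (hV : ContDiff ℝ 1 V) (hP : ContDiff ℝ 1 P)
    (hηper : ∀ θ : ℝ, η (θ + 1) = η θ + 1)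
    (hη' : ∀ θ : ℝ, 0 ≤ deriv η θ)
    (hPper : ∀ θ : ℝ, P (θ + 1) = P θ)
    (hP' : ∀ θ : ℝ, deriv P θ = (V θ - σ) * deriv η θ)
    (hPint : (∫ θ in (0:ℝ)..1, P θ * deriv η θ) = 0) :
    ∀ θ : ℝ, |P θ| ≤ Real.sqrt (∫ θ in (0:ℝ)..1, (V θ - σ) ^ 2 * deriv η θ) := by
  have hη'c : Continuous (deriv η) := hη.continuous_deriv le_rfl
  have hη'int := integral_deriv_eq_one_of_add_one hη hηper
  obtain ⟨θ₀, -, hθ₀⟩ := exists_zero_of_integral_mul_eq_zero zero_le_one hP.continuous hη'c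
    (fun θ _ => hη' θ) (by rw [hη'int]; exact one_pos) hPint
  intro θ
  calc |P θ| ≤ ∫ t in (0:ℝ)..1, |deriv P t| :=
        abs_le_integral_abs_deriv_of_periodic hPper one_pos
          (hP.differentiable one_ne_zero) (hP.continuous_deriv le_rfl) hθ₀ θ
    _ = ∫ t in (0:ℝ)..1, |V t - σ| * deriv η t := by
        simp only [hP', abs_mul, abs_of_nonneg (hη' _)]
    _ ≤ √(∫ t in (0:ℝ)..1, |V t - σ| ^ 2 * deriv η t) :=
        (le_abs_self _).trans <| Real.abs_le_sqrt <| sq_integral_mul_le_integral_sq_mul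
          zero_le_one (hV.continuous.sub continuous_const).abs hη'c (fun θ _ => hη' θ) hη'int
    _ = √(∫ t in (0:ℝ)..1, (V t - σ) ^ 2 * deriv η t) := by simp only [sq_abs]

/-- uniform bound on the Lagrangian pressure for the μDP equation. -/
theorem stmt_16 (σ : ℝ) (η V P : ℝ → ℝ)
    (hη : ContDiff ℝ 1 η) (hV : ContDiff ℝ 1 V) (hP : ContDiff ℝ 1 P)
    (hηper : ∀ θ : ℝ, η (θ + 1) = η θ + 1)
    (hη' : ∀ θ : ℝ, 0 ≤ deriv η θ)
    (hVper : ∀ θ : ℝ, V (θ + 1) = V θ)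
    (hPper : ∀ θ : ℝ, P (θ + 1) = P θ)
    (hP' : ∀ θ : ℝ, deriv P θ = (V θ - σ) * deriv η θ)
    (hPint : (∫ θ in (0:ℝ)..1, P θ * deriv η θ) = 0) :
    ∀ θ : ℝ, |P θ| ≤ Real.sqrt (∫ θ in (0:ℝ)..1, (V θ - σ) ^ 2 * deriv η θ) :=
  stmt_16_general σ η V P hη hV hP hηper hη' hPper hP' hPint
end

section
/- Let t₁ < t₂, let F : [t₁,t₂] → ℝ be continuous, and let x, y : [t₁,t₂] → ℝ be C² with x'' = Fx and y'' = Fy. Set r(t) = √(x(t)² + y(t)²), assume r(t) > 0 and r'(t) ≤ 0 for all t ∈ [t₁,t₂], let ω₀ = x y' − y x' (which is constant on [t₁,t₂]), and let F̄ = max{ −inf_{t∈[t₁,t₂]} F(t), 0 }. Then r(t₂) ≥ |ω₀| r(t₁) / √( r(t₁)² r'(t₁)² + ω₀² + F̄ r(t₁)⁴ ). -/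
/-!
Along a solution of `x'' = F x`, `y'' = F y` the angular momentum `ω = x y' - y x'` is conserved,
and for any constant `c` with `F + c ≥ 0` the modified energy `E = x'² + y'² + c r²` satisfies
`E' = 2 (F + c) (x x' + y y') = 2 (F + c) r r'`, so `E` does not increase while `r` does not.
Taking `c = F̄` and using Lagrange's identity `r² (x'² + y'²) = (r r')² + ω²`,
`ω² ≤ r(t₂)² E(t₂) ≤ r(t₂)² E(t₁)`, and `r(t₁)² E(t₁) = (r r')(t₁)² + ω² + F̄ r(t₁)⁴`.
-/

open Set

theorem Convex.antitoneOn_of_hasDerivWithinAt_nonpos' {D : Set ℝ} (hD : Convex ℝ D)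
    {f f' : ℝ → ℝ} (hf : ∀ t ∈ D, HasDerivWithinAt f (f' t) D t) (hf' : ∀ t ∈ D, f' t ≤ 0) :
    AntitoneOn f D :=
  antitoneOn_of_hasDerivWithinAt_nonpos hD (fun t ht => (hf t ht).continuousWithinAt)
    (fun t ht => (hf t (interior_subset ht)).mono interior_subset)
    (fun t ht => hf' t (interior_subset ht))

theorem Convex.eq_of_hasDerivWithinAt_zero {D : Set ℝ} (hD : Convex ℝ D) {f : ℝ → ℝ}
    (hf : ∀ t ∈ D, HasDerivWithinAt f 0 D t) {a b : ℝ} (ha : a ∈ D) (hb : b ∈ D) :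
    f a = f b := by
  have hanti : AntitoneOn f D := hD.antitoneOn_of_hasDerivWithinAt_nonpos' hf fun _ _ => le_rfl
  have hmono : AntitoneOn (-f) D :=
    hD.antitoneOn_of_hasDerivWithinAt_nonpos' (fun t ht => (hf t ht).neg) fun _ _ => neg_zero.le
  rcases le_total a b with hab | hba
  · exact le_antisymm (neg_le_neg_iff.mp (hmono ha hb hab)) (hanti ha hb hab)
  · exact le_antisymm (hanti hb ha hba) (neg_le_neg_iff.mp (hmono hb ha hba))

theorem le_add_max_neg_csInf {f : ℝ → ℝ} {s : Set ℝ} (hf : BddBelow (f '' s)) {t : ℝ}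
    (ht : t ∈ s) : 0 ≤ f t + max (-sInf (f '' s)) 0 := by
  have := csInf_le hf (mem_image_of_mem f ht)
  have := le_max_left (-sInf (f '' s)) 0
  linarith

theorem sq_mul_sub_mul_le_mul_add_mul {a b u v c : ℝ} (hc : 0 ≤ c) :
    (a * v - b * u) ^ 2 ≤ (a ^ 2 + b ^ 2) * (u ^ 2 + v ^ 2 + c * (a ^ 2 + b ^ 2)) := by
  nlinarith [sq_nonneg (a * u + b * v), mul_nonneg hc (sq_nonneg (a ^ 2 + b ^ 2))]

theorem abs_mul_sqrt_div_sqrt_le_sqrt {w R₁ R₂ D : ℝ} (h : w ^ 2 * R₁ ≤ R₂ * D) :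
    |w| * √R₁ / √D ≤ √R₂ := by
  rcases le_or_gt D 0 with hD | hD
  · rw [Real.sqrt_eq_zero'.mpr hD, div_zero]
    exact Real.sqrt_nonneg _
  rw [div_le_iff₀ (Real.sqrt_pos.mpr hD), ← Real.sqrt_sq_eq_abs,
    ← Real.sqrt_mul (sq_nonneg w), ← Real.sqrt_mul' _ hD.le]
  exact Real.sqrt_le_sqrt h

section CentralForce

variable {s : Set ℝ} {F x y x' y' : ℝ → ℝ} {t : ℝ}

theorem hasDerivWithinAt_angularMomentum (hx : HasDerivWithinAt x (x' t) s t)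
    (hx' : HasDerivWithinAt x' (F t * x t) s t) (hy : HasDerivWithinAt y (y' t) s t)
    (hy' : HasDerivWithinAt y' (F t * y t) s t) :
    HasDerivWithinAt (fun t => x t * y' t - y t * x' t) 0 s t :=
  ((hx.mul hy').sub (hy.mul hx')).congr_deriv (by ring)

theorem hasDerivWithinAt_energy (c : ℝ) (hx : HasDerivWithinAt x (x' t) s t)
    (hx' : HasDerivWithinAt x' (F t * x t) s t) (hy : HasDerivWithinAt y (y' t) s t)
    (hy' : HasDerivWithinAt y' (F t * y t) s t) :
    HasDerivWithinAt (fun t => x' t ^ 2 + y' t ^ 2 + c * (x t ^ 2 + y t ^ 2))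
      (2 * (F t + c) * (x t * x' t + y t * y' t)) s t :=
  (((hx'.pow 2).add (hy'.pow 2)).add (((hx.pow 2).add (hy.pow 2)).const_mul c)).congr_deriv
    (by push_cast; ring)

end CentralForce

theorem stmt_18_general (t₁ t₂ : ℝ) (h12 : t₁ < t₂)
    (F : ℝ → ℝ) (hF : ContinuousOn F (Icc t₁ t₂))
    (x y x' y' : ℝ → ℝ)
    (hx : ∀ t ∈ Icc t₁ t₂, HasDerivWithinAt x (x' t) (Icc t₁ t₂) t)
    (hx' : ∀ t ∈ Icc t₁ t₂, HasDerivWithinAt x' (F t * x t) (Icc t₁ t₂) t)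
    (hy : ∀ t ∈ Icc t₁ t₂, HasDerivWithinAt y (y' t) (Icc t₁ t₂) t)
    (hy' : ∀ t ∈ Icc t₁ t₂, HasDerivWithinAt y' (F t * y t) (Icc t₁ t₂) t)
    -- r' ≤ 0, expressed via r r' = x x' + y y' and r > 0
    (hrdec : ∀ t ∈ Icc t₁ t₂, x t * x' t + y t * y' t ≤ 0) :
    Real.sqrt (x t₂ ^ 2 + y t₂ ^ 2) ≥
      |x t₁ * y' t₁ - y t₁ * x' t₁| * Real.sqrt (x t₁ ^ 2 + y t₁ ^ 2) /
        Real.sqrt ((x t₁ * x' t₁ + y t₁ * y' t₁) ^ 2 + (x t₁ * y' t₁ - y t₁ * x' t₁) ^ 2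
          + max (-(sInf (F '' Icc t₁ t₂))) 0 * (x t₁ ^ 2 + y t₁ ^ 2) ^ 2) := by
  have ht₁ : t₁ ∈ Icc t₁ t₂ := left_mem_Icc.mpr h12.le
  have ht₂ : t₂ ∈ Icc t₁ t₂ := right_mem_Icc.mpr h12.le
  set c := max (-(sInf (F '' Icc t₁ t₂))) 0
  have hFc : ∀ t ∈ Icc t₁ t₂, 0 ≤ F t + c := fun t ht =>
    le_add_max_neg_csInf (isCompact_Icc.image_of_continuousOn hF).bddBelow ht
  have hω : x t₁ * y' t₁ - y t₁ * x' t₁ = x t₂ * y' t₂ - y t₂ * x' t₂ :=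
    (convex_Icc t₁ t₂).eq_of_hasDerivWithinAt_zero (fun t ht =>
      hasDerivWithinAt_angularMomentum (hx t ht) (hx' t ht) (hy t ht) (hy' t ht)) ht₁ ht₂
  have hE : x' t₂ ^ 2 + y' t₂ ^ 2 + c * (x t₂ ^ 2 + y t₂ ^ 2)
      ≤ x' t₁ ^ 2 + y' t₁ ^ 2 + c * (x t₁ ^ 2 + y t₁ ^ 2) :=
    (convex_Icc t₁ t₂).antitoneOn_of_hasDerivWithinAt_nonpos'
      (fun t ht => hasDerivWithinAt_energy c (hx t ht) (hx' t ht) (hy t ht) (hy' t ht))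
      (fun t ht => mul_nonpos_of_nonneg_of_nonpos (by linarith [hFc t ht]) (hrdec t ht))
      ht₁ ht₂ h12.le
  refine abs_mul_sqrt_div_sqrt_le_sqrt ?_
  calc (x t₁ * y' t₁ - y t₁ * x' t₁) ^ 2 * (x t₁ ^ 2 + y t₁ ^ 2)
      ≤ (x t₂ ^ 2 + y t₂ ^ 2) * (x' t₂ ^ 2 + y' t₂ ^ 2 + c * (x t₂ ^ 2 + y t₂ ^ 2))
        * (x t₁ ^ 2 + y t₁ ^ 2) := by
        rw [hω]
        gcongr
        exact sq_mul_sub_mul_le_mul_add_mul (le_max_right _ _)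
    _ ≤ (x t₂ ^ 2 + y t₂ ^ 2) * (x' t₁ ^ 2 + y' t₁ ^ 2 + c * (x t₁ ^ 2 + y t₁ ^ 2))
        * (x t₁ ^ 2 + y t₁ ^ 2) := by gcongr
    _ = _ := by ring

/-- quantitative lower bound for the radius of a planar central-force
system over an interval where the radius is nonincreasing. -/
theorem stmt_18 (t₁ t₂ : ℝ) (h12 : t₁ < t₂)
    (F : ℝ → ℝ) (hF : ContinuousOn F (Icc t₁ t₂))
    (x y x' y' : ℝ → ℝ)
    (hx : ∀ t ∈ Icc t₁ t₂, HasDerivWithinAt x (x' t) (Icc t₁ t₂) t)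
    (hx' : ∀ t ∈ Icc t₁ t₂, HasDerivWithinAt x' (F t * x t) (Icc t₁ t₂) t)
    (hy : ∀ t ∈ Icc t₁ t₂, HasDerivWithinAt y (y' t) (Icc t₁ t₂) t)
    (hy' : ∀ t ∈ Icc t₁ t₂, HasDerivWithinAt y' (F t * y t) (Icc t₁ t₂) t)
    (hrpos : ∀ t ∈ Icc t₁ t₂, 0 < x t ^ 2 + y t ^ 2)
    -- r' ≤ 0, expressed via r r' = x x' + y y' and r > 0
    (hrdec : ∀ t ∈ Icc t₁ t₂, x t * x' t + y t * y' t ≤ 0) :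
    Real.sqrt (x t₂ ^ 2 + y t₂ ^ 2) ≥
      |x t₁ * y' t₁ - y t₁ * x' t₁| * Real.sqrt (x t₁ ^ 2 + y t₁ ^ 2) /
        Real.sqrt ((x t₁ * x' t₁ + y t₁ * y' t₁) ^ 2 + (x t₁ * y' t₁ - y t₁ * x' t₁) ^ 2
          + max (-(sInf (F '' Icc t₁ t₂))) 0 * (x t₁ ^ 2 + y t₁ ^ 2) ^ 2) :=
  stmt_18_general t₁ t₂ h12 F hF x y x' y' hx hx' hy hy' hrdec
end

section
/- Let T ∈ (0,∞] and let u : [0,T) × S¹ → ℝ be C³ in θ and C¹ in t (with continuous mixed partial derivatives) solving the μ-Degasperis–Procesi equation, i.e., the μ-λ equation with λ = 3 and momentum m = μ(u) − u_θθ. Let σ = ∫₀¹ u(t,θ) dθ (which is constant in t), and for each t let Q(t,·) be the unique C¹ 1-periodic function with Q_θ(t,θ) = u(t,θ) − σ and ∫₀¹ Q(t,θ) dθ = 0. Then u_t + u u_θ = 3σ Q on [0,T) × S¹. -/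
/-!
Put `G = u_t + u u_θ - 3σQ` at a fixed time. Its second θ-derivative is minus the left-hand side
of the μDP equation, so `G` is affine in θ, hence constant because it is 1-periodic. Its mean over
a period is `∫ u_t = dσ/dt = 0` plus `∫ u u_θ = 0` minus `3σ ∫ Q = 0`. The analytic input is
differentiation of θ-integrals in t, which gives both `dσ/dt = ∫ u_t` and the equality of mixed
partials `(u_t)_θ = u_tθ`, `(u_tθ)_θ = u_tθθ`; it is done on a compact time interval `[0, t₁] ⊆ J`.
-/

open Set Function MeasureTheory intervalIntegral

theorem continuous_of_forall_hasDerivAt {f f' : ℝ → ℝ} (h : ∀ x, HasDerivAt f (f' x) x) :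
    Continuous f :=
  continuous_iff_continuousAt.mpr fun x => (h x).continuousAt

theorem continuousOn_intervalIntegral_of_continuousOn_uncurry {X E : Type*} [TopologicalSpace X]
    [NormedAddCommGroup E] [NormedSpace ℝ E] {f : X → ℝ → E} {s : Set X}
    (hf : ContinuousOn (uncurry f) (s ×ˢ univ)) (a b : ℝ) :
    ContinuousOn (fun x => ∫ y in a..b, f x y) s := by
  rw [continuousOn_iff_continuous_domRestrict]
  have : Continuous (uncurry fun (x : s) y => f x y) :=
    hf.comp_continuous (f := fun p : s × ℝ => ((p.1 : X), p.2)) (by fun_prop)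
      fun p => ⟨p.1.2, mem_univ _⟩
  exact continuous_parametric_intervalIntegral_of_continuous' this a b

theorem integral_eq_sub_of_hasDerivWithinAt_Icc {g g' : ℝ → ℝ} {t₀ t₁ s t : ℝ}
    (hg : ∀ r ∈ Icc t₀ t₁, HasDerivWithinAt g (g' r) (Icc t₀ t₁) r)
    (hg' : ContinuousOn g' (Icc t₀ t₁)) (hs : s ∈ Icc t₀ t₁) (ht : t ∈ Icc t₀ t₁) :
    ∫ r in t..s, g' r = g s - g t := by
  have hsub : uIcc t s ⊆ Icc t₀ t₁ := uIcc_subset_Icc ht hs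
  refine integral_eq_sub_of_hasDeriv_right ((HasDerivWithinAt.continuousOn hg).mono hsub)
    (fun r hr => ?_) (hg'.mono hsub).intervalIntegrable
  have hr' : r ∈ Ioo t₀ t₁ :=
    ⟨(le_min ht.1 hs.1).trans_lt hr.1, hr.2.trans_le (max_le ht.2 hs.2)⟩
  exact ((hg r (Ioo_subset_Icc_self hr')).hasDerivAt (Icc_mem_nhds hr'.1 hr'.2)).hasDerivWithinAt

theorem hasDerivWithinAt_intervalIntegral_of_continuousOn_uncurry {f ft : ℝ → ℝ → ℝ}
    {t₀ t₁ t a b : ℝ} (ht : t ∈ Icc t₀ t₁)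
    (hf : ∀ y, ∀ s ∈ Icc t₀ t₁, HasDerivWithinAt (f · y) (ft s y) (Icc t₀ t₁) s)
    (hft : ContinuousOn (uncurry ft) (Icc t₀ t₁ ×ˢ univ))
    (hfi : ∀ s ∈ Icc t₀ t₁, IntervalIntegrable (f s) volume a b) :
    HasDerivWithinAt (fun s => ∫ y in a..b, f s y) (∫ y in a..b, ft t y) (Icc t₀ t₁) t := by
  set g := fun r => ∫ y in a..b, ft r y
  have hg : ContinuousOn g (Icc t₀ t₁) :=
    continuousOn_intervalIntegral_of_continuousOn_uncurry hft a b
  have hprimitive : ∀ s ∈ Icc t₀ t₁,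
      (∫ y in a..b, f s y) = (∫ y in a..b, f t y) + ∫ r in t..s, g r := by
    intro s hs
    have hsub : uIcc t s ×ˢ uIcc a b ⊆ Icc t₀ t₁ ×ˢ univ :=
      prod_mono (uIcc_subset_Icc ht hs) (subset_univ _)
    have hint : IntegrableOn (uncurry ft) (uIoc t s ×ˢ uIoc a b) :=
      ((hft.mono hsub).integrableOn_compact (isCompact_uIcc.prod isCompact_uIcc)).mono_set
        (prod_mono uIoc_subset_uIcc uIoc_subset_uIcc)
    calc (∫ y in a..b, f s y) = (∫ y in a..b, f t y) + ∫ y in a..b, (f s y - f t y) := by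
          rw [integral_sub (hfi s hs) (hfi t ht)]; ring
      _ = (∫ y in a..b, f t y) + ∫ y in a..b, ∫ r in t..s, ft r y := by
          congr 1
          refine integral_congr fun y _ => ?_
          exact (integral_eq_sub_of_hasDerivWithinAt_Icc (hf y)
            (hft.uncurry_right y (mem_univ y)) hs ht).symm
      _ = (∫ y in a..b, f t y) + ∫ r in t..s, g r := by
          rw [intervalIntegral_intervalIntegral_swap hint]
  have : Fact (t ∈ Icc t₀ t₁) := ⟨ht⟩
  have hderiv : HasDerivWithinAt (fun s => ∫ r in t..s, g r) (g t) (Icc t₀ t₁) t :=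
    integral_hasDerivWithinAt_right IntervalIntegrable.refl
      (hg.stronglyMeasurableAtFilter_nhdsWithin measurableSet_Icc t) (hg t ht)
  exact (hderiv.const_add _).congr_of_mem hprimitive ht

theorem hasDerivAt_of_mixed_partials {v vθ vt vtθ : ℝ → ℝ → ℝ} {t₀ t₁ t : ℝ}
    (h01 : t₀ < t₁) (ht : t ∈ Icc t₀ t₁)
    (hv : ∀ s ∈ Icc t₀ t₁, ∀ θ, HasDerivAt (v s) (vθ s θ) θ)
    (hvθ : ∀ s ∈ Icc t₀ t₁, Continuous (vθ s))
    (hvt : ∀ θ, ∀ s ∈ Icc t₀ t₁, HasDerivWithinAt (v · θ) (vt s θ) (Icc t₀ t₁) s)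
    (hvθt : ∀ θ, ∀ s ∈ Icc t₀ t₁, HasDerivWithinAt (vθ · θ) (vtθ s θ) (Icc t₀ t₁) s)
    (hvtθ : ContinuousOn (uncurry vtθ) (Icc t₀ t₁ ×ˢ univ)) (θ : ℝ) :
    HasDerivAt (vt t) (vtθ t θ) θ := by
  have hdiff : ∀ θ', vt t θ' = vt t 0 + ∫ φ in 0..θ', vtθ t φ := by
    intro θ'
    have hsub : HasDerivWithinAt (fun s => v s θ' - v s 0) (vt t θ' - vt t 0) (Icc t₀ t₁) t :=
      (hvt θ' t ht).sub (hvt 0 t ht)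
    have hint : HasDerivWithinAt (fun s => v s θ' - v s 0) (∫ φ in 0..θ', vtθ t φ)
        (Icc t₀ t₁) t :=
      (hasDerivWithinAt_intervalIntegral_of_continuousOn_uncurry ht hvθt hvtθ
        fun s hs => (hvθ s hs).intervalIntegrable _ _).congr_of_mem
        (fun s hs => (integral_eq_sub_of_hasDerivAt (fun φ _ => hv s hs φ)
          ((hvθ s hs).intervalIntegrable _ _)).symm) ht
    linear_combination (uniqueDiffOn_Icc h01 t ht).eq_deriv _ hsub hint
  have hcont : Continuous (vtθ t) := continuousOn_univ.mp (hvtθ.uncurry_left t ht)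
  exact ((hcont.integral_hasStrictDerivAt 0 θ).hasDerivAt.const_add (vt t 0)).congr_of_eventuallyEq
    (.of_forall hdiff)

theorem Function.Periodic.hasDerivAt_periodic {f f' : ℝ → ℝ} {c : ℝ} (hf : Periodic f c)
    (hd : ∀ x, HasDerivAt f (f' x) x) : Periodic f' c := fun x =>
  ((hd (x + c)).comp_add_const x c).unique (by rw [hf.funext]; exact hd x)

theorem Function.Periodic.eq_of_hasDerivAt_of_hasDerivAt_zero {f f' : ℝ → ℝ} {c : ℝ}
    (hf : Periodic f c) (hc : c ≠ 0) (hd : ∀ x, HasDerivAt f (f' x) x)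
    (hd' : ∀ x, HasDerivAt f' 0 x) (x y : ℝ) : f x = f y := by
  have hf'_const : ∀ x, f' x = f' 0 := fun x =>
    is_const_of_deriv_eq_zero (fun x => (hd' x).differentiableAt) (fun x => (hd' x).deriv) x 0
  have haffine : ∀ x, HasDerivAt (fun x => f x - f' 0 * x) 0 x := fun x => by
    have := (hd x).sub ((hasDerivAt_id' x).const_mul (f' 0))
    rwa [hf'_const x, mul_one, sub_self] at this
  have hlin : ∀ x y, f x - f' 0 * x = f y - f' 0 * y :=
    is_const_of_deriv_eq_zero (fun x => (haffine x).differentiableAt) fun x => (haffine x).deriv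
  have hslope : f' 0 = 0 := by
    have hperiod : f c = f 0 := by simpa using hf 0
    have : f' 0 * c = 0 := by linarith [hlin c 0]
    exact (mul_eq_zero.mp this).resolve_right hc
  have hconst : ∀ x, HasDerivAt f 0 x := fun x => by simpa [hf'_const x, hslope] using hd x
  exact is_const_of_deriv_eq_zero (fun x => (hconst x).differentiableAt)
    (fun x => (hconst x).deriv) x y

theorem integral_mul_deriv_eq_zero_of_eq {f f' : ℝ → ℝ} {a b : ℝ}
    (hd : ∀ x, HasDerivAt f (f' x) x) (hf' : Continuous f') (hab : f a = f b) :
    ∫ x in a..b, f x * f' x = 0 := by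
  have := integral_deriv_mul_eq_sub (fun x _ => hd x) (fun x _ => hd x)
    (hf'.intervalIntegrable a b) (hf'.intervalIntegrable a b)
  have htwice : ∫ x in a..b, (f' x * f x + f x * f' x) = 2 * ∫ x in a..b, f x * f' x := by
    rw [← intervalIntegral.integral_const_mul]; exact integral_congr fun x _ => by ring
  rw [htwice, hab, sub_self] at this
  linarith

theorem ut_add_u_mul_uθ_eq_of_muDP {u ut uθ utθ uθθ utθθ uθθθ Q : ℝ → ℝ} {σ : ℝ}
    (hu : Periodic u 1) (hut : Periodic ut 1) (hQ : Periodic Q 1)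
    (huθ : ∀ θ, HasDerivAt u (uθ θ) θ) (huθθ : ∀ θ, HasDerivAt uθ (uθθ θ) θ)
    (huθθθ : ∀ θ, HasDerivAt uθθ (uθθθ θ) θ)
    (hutθ : ∀ θ, HasDerivAt ut (utθ θ) θ) (hutθθ : ∀ θ, HasDerivAt utθ (utθθ θ) θ)
    (hQθ : ∀ θ, HasDerivAt Q (u θ - σ) θ)
    (hPDE : ∀ θ, -(utθθ θ) + u θ * (-(uθθθ θ)) + 3 * uθ θ * (σ - uθθ θ) = 0)
    (hut_mean : ∫ θ in (0:ℝ)..1, ut θ = 0) (hQ_mean : ∫ θ in (0:ℝ)..1, Q θ = 0) (θ : ℝ) :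
    ut θ + u θ * uθ θ = 3 * σ * Q θ := by
  set G := fun θ => ut θ + u θ * uθ θ - 3 * σ * Q θ
  set G' := fun θ => utθ θ + (uθ θ * uθ θ + u θ * uθθ θ) - 3 * σ * (u θ - σ)
  have hG : ∀ θ, HasDerivAt G (G' θ) θ := fun θ =>
    ((hutθ θ).add ((huθ θ).mul (huθθ θ))).sub ((hQθ θ).const_mul (3 * σ))
  have hG' : ∀ θ, HasDerivAt G' 0 θ := fun θ => by
    have := ((hutθθ θ).add (((huθθ θ).mul (huθθ θ)).add ((huθ θ).mul (huθθθ θ)))).sub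
      (((huθ θ).sub_const σ).const_mul (3 * σ))
    exact this.congr_deriv (by linear_combination -hPDE θ)
  have hGper : Periodic G 1 := fun θ => by
    simp only [G, hu θ, hut θ, hQ θ, hu.hasDerivAt_periodic huθ θ]
  have hG_mean : ∫ θ in (0:ℝ)..1, G θ = 0 := by
    have huθ_cont := continuous_of_forall_hasDerivAt huθθ
    have hut_int : IntervalIntegrable ut volume 0 1 :=
      (continuous_of_forall_hasDerivAt hutθ).intervalIntegrable 0 1
    have huuθ_int : IntervalIntegrable (fun θ => u θ * uθ θ) volume 0 1 :=
      ((continuous_of_forall_hasDerivAt huθ).mul huθ_cont).intervalIntegrable 0 1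
    have hQ_int : IntervalIntegrable (fun θ => 3 * σ * Q θ) volume 0 1 :=
      ((continuous_of_forall_hasDerivAt hQθ).const_smul (3 * σ)).intervalIntegrable 0 1
    rw [integral_sub (hut_int.add huuθ_int) hQ_int, integral_add hut_int huuθ_int,
      intervalIntegral.integral_const_mul, hut_mean, hQ_mean,
      integral_mul_deriv_eq_zero_of_eq huθ huθ_cont (by simpa using (hu 0).symm)]
    ring
  have hGθ : G θ = 0 := by
    have hGconst := hGper.eq_of_hasDerivAt_of_hasDerivAt_zero one_ne_zero hG hG'
    rw [← hG_mean, integral_congr (g := fun _ => G θ) fun x _ => hGconst x θ]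
    simp
  exact sub_eq_zero.mp hGθ

theorem exists_Icc_subset_of_coe_lt {T : EReal} {t : ℝ} (ht : (t : EReal) < T) :
    ∃ t₁, t < t₁ ∧ Icc 0 t₁ ⊆ {s : ℝ | 0 ≤ s ∧ (s : EReal) < T} := by
  obtain ⟨r, htr, hrT⟩ := EReal.lt_iff_exists_real_btwn.mp ht
  exact ⟨r, EReal.coe_lt_coe_iff.mp htr,
    fun s hs => ⟨hs.1, (EReal.coe_le_coe_iff.mpr hs.2).trans_lt hrT⟩⟩

theorem stmt_19_general (T : EReal)
    (J : Set ℝ) (hJ : J = {t : ℝ | 0 ≤ t ∧ (t : EReal) < T})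
    (u ut uθ utθ uθθ utθθ uθθθ Q : ℝ → ℝ → ℝ) (σ : ℝ)
    (huper : ∀ t ∈ J, ∀ θ : ℝ, u t (θ + 1) = u t θ)
    -- u is C³ in θ
    (huθ : ∀ t ∈ J, ∀ θ : ℝ, HasDerivAt (u t) (uθ t θ) θ)
    (huθθ : ∀ t ∈ J, ∀ θ : ℝ, HasDerivAt (uθ t) (uθθ t θ) θ)
    (huθθθ : ∀ t ∈ J, ∀ θ : ℝ, HasDerivAt (uθθ t) (uθθθ t θ) θ)
    -- u is C¹ in t, with continuous mixed partials u_t, u_tθ, u_tθθ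
    (hut : ∀ θ : ℝ, ∀ t ∈ J, HasDerivWithinAt (fun s => u s θ) (ut t θ) J t)
    (hutθ : ∀ θ : ℝ, ∀ t ∈ J, HasDerivWithinAt (fun s => uθ s θ) (utθ t θ) J t)
    (hutθθ : ∀ θ : ℝ, ∀ t ∈ J, HasDerivWithinAt (fun s => uθθ s θ) (utθθ t θ) J t)
    (hutc : ContinuousOn (fun p : ℝ × ℝ => ut p.1 p.2) (J ×ˢ univ))
    (hutθc : ContinuousOn (fun p : ℝ × ℝ => utθ p.1 p.2) (J ×ˢ univ))
    (hutθθc : ContinuousOn (fun p : ℝ × ℝ => utθθ p.1 p.2) (J ×ˢ univ))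
    -- σ = ∫₀¹ u(t,θ) dθ, constant in t
    (hσ : ∀ t ∈ J, (∫ φ in (0:ℝ)..1, u t φ) = σ)
    -- the μDP equation: m_t + u m_θ + 3 u_θ m = 0 with m = σ - u_θθ
    (hPDE : ∀ t ∈ J, ∀ θ : ℝ,
      -(utθθ t θ) + u t θ * (-(uθθθ t θ)) + 3 * uθ t θ * (σ - uθθ t θ) = 0)
    -- Q(t,·) is the C¹ 1-periodic function with Q_θ = u - σ and mean zero
    (hQper : ∀ t ∈ J, ∀ θ : ℝ, Q t (θ + 1) = Q t θ)
    (hQθ : ∀ t ∈ J, ∀ θ : ℝ, HasDerivAt (Q t) (u t θ - σ) θ)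
    (hQint : ∀ t ∈ J, (∫ θ in (0:ℝ)..1, Q t θ) = 0) :
    ∀ t ∈ J, ∀ θ : ℝ, ut t θ + u t θ * uθ t θ = 3 * σ * Q t θ := by
  intro t ht θ
  obtain ⟨ht0, htT⟩ : 0 ≤ t ∧ (t : EReal) < T := by rwa [hJ] at ht
  obtain ⟨t₁, htt₁, hI⟩ := exists_Icc_subset_of_coe_lt htT
  rw [← hJ] at hI
  have htI : t ∈ Icc 0 t₁ := ⟨ht0, htt₁.le⟩
  have h0t₁ : (0 : ℝ) < t₁ := ht0.trans_lt htt₁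
  have hunique : UniqueDiffWithinAt ℝ (Icc 0 t₁) t := uniqueDiffOn_Icc h0t₁ t htI
  have restrict : ∀ {f ft : ℝ → ℝ → ℝ}, (∀ θ, ∀ s ∈ J, HasDerivWithinAt (f · θ) (ft s θ) J s) →
      ∀ θ, ∀ s ∈ Icc 0 t₁, HasDerivWithinAt (f · θ) (ft s θ) (Icc 0 t₁) s :=
    fun h θ s hs => (h θ s (hI hs)).mono hI
  have hmean : ∫ θ in (0:ℝ)..1, ut t θ = 0 :=
    hunique.eq_deriv _ (hasDerivWithinAt_intervalIntegral_of_continuousOn_uncurry htI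
      (restrict hut) (hutc.mono (prod_mono hI subset_rfl))
      fun s hs => (continuous_of_forall_hasDerivAt (huθ s (hI hs))).intervalIntegrable 0 1)
      ((hasDerivWithinAt_const t _ σ).congr (fun s hs => hσ s (hI hs)) (hσ t ht))
  have hutper : Periodic (ut t) 1 := fun θ =>
    (hunique.mono hI).eq_deriv _ (hut (θ + 1) t ht)
      ((hut θ t ht).congr (fun s hs => huper s hs θ) (huper t ht θ))
  exact ut_add_u_mul_uθ_eq_of_muDP (huper t ht) hutper (hQper t ht) (huθ t ht) (huθθ t ht)
    (huθθθ t ht)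
    (hasDerivAt_of_mixed_partials h0t₁ htI (fun s hs => huθ s (hI hs))
      (fun s hs => continuous_of_forall_hasDerivAt (huθθ s (hI hs))) (restrict hut)
      (restrict hutθ) (hutθc.mono (prod_mono hI subset_rfl)))
    (hasDerivAt_of_mixed_partials h0t₁ htI (fun s hs => huθθ s (hI hs))
      (fun s hs => continuous_of_forall_hasDerivAt (huθθθ s (hI hs))) (restrict hutθ)
      (restrict hutθθ) (hutθθc.mono (prod_mono hI subset_rfl)))
    (hQθ t ht) (hPDE t ht) hmean (hQint t ht) θ

/-- for the μ-Degasperis–Procesi equation (λ = 3), the velocity satisfies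
u_t + u u_θ = 3σ Q, where Q is the mean-zero antiderivative of u - σ. -/
theorem stmt_19 (T : EReal) (hT : 0 < T)
    (J : Set ℝ) (hJ : J = {t : ℝ | 0 ≤ t ∧ (t : EReal) < T})
    (u ut uθ utθ uθθ utθθ uθθθ Q : ℝ → ℝ → ℝ) (σ : ℝ)
    (huper : ∀ t ∈ J, ∀ θ : ℝ, u t (θ + 1) = u t θ)
    -- u is C³ in θ
    (huθ : ∀ t ∈ J, ∀ θ : ℝ, HasDerivAt (u t) (uθ t θ) θ)
    (huθθ : ∀ t ∈ J, ∀ θ : ℝ, HasDerivAt (uθ t) (uθθ t θ) θ)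
    (huθθθ : ∀ t ∈ J, ∀ θ : ℝ, HasDerivAt (uθθ t) (uθθθ t θ) θ)
    (huθθθc : ∀ t ∈ J, Continuous (uθθθ t))
    -- u is C¹ in t, with continuous mixed partials u_t, u_tθ, u_tθθ
    (hut : ∀ θ : ℝ, ∀ t ∈ J, HasDerivWithinAt (fun s => u s θ) (ut t θ) J t)
    (hutθ : ∀ θ : ℝ, ∀ t ∈ J, HasDerivWithinAt (fun s => uθ s θ) (utθ t θ) J t)
    (hutθθ : ∀ θ : ℝ, ∀ t ∈ J, HasDerivWithinAt (fun s => uθθ s θ) (utθθ t θ) J t)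
    (hutc : ContinuousOn (fun p : ℝ × ℝ => ut p.1 p.2) (J ×ˢ univ))
    (hutθc : ContinuousOn (fun p : ℝ × ℝ => utθ p.1 p.2) (J ×ˢ univ))
    (hutθθc : ContinuousOn (fun p : ℝ × ℝ => utθθ p.1 p.2) (J ×ˢ univ))
    -- σ = ∫₀¹ u(t,θ) dθ, constant in t
    (hσ : ∀ t ∈ J, (∫ φ in (0:ℝ)..1, u t φ) = σ)
    -- the μDP equation: m_t + u m_θ + 3 u_θ m = 0 with m = σ - u_θθ
    (hPDE : ∀ t ∈ J, ∀ θ : ℝ,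
      -(utθθ t θ) + u t θ * (-(uθθθ t θ)) + 3 * uθ t θ * (σ - uθθ t θ) = 0)
    -- Q(t,·) is the C¹ 1-periodic function with Q_θ = u - σ and mean zero
    (hQper : ∀ t ∈ J, ∀ θ : ℝ, Q t (θ + 1) = Q t θ)
    (hQθ : ∀ t ∈ J, ∀ θ : ℝ, HasDerivAt (Q t) (u t θ - σ) θ)
    (hQint : ∀ t ∈ J, (∫ θ in (0:ℝ)..1, Q t θ) = 0) :
    ∀ t ∈ J, ∀ θ : ℝ, ut t θ + u t θ * uθ t θ = 3 * σ * Q t θ :=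
  stmt_19_general T J hJ u ut uθ utθ uθθ utθθ uθθθ Q σ huper huθ huθθ huθθθ hut hutθ hutθθ hutc
    hutθc hutθθc hσ hPDE hQper hQθ hQint
end
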